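/- The involution γ on a line l determined by a point C ∈ l and a pair (R,S) on l (defined by C = [X, γ(X) | R, S]) is a projective transformation of l, expressible as a composition of three perspectivities. -/
import Mathlib


open Classical in
noncomputable def ratio {k : Type*} [Field k] (X Y Z W : k × k) : k :=
  if h : ∃ r : k, X - Y = r • (Z - W) then h.choose else 0

lemma ratio_eq {k : Type*} [Field k] (v : k × k) (hv : v ≠ 0) (n m : k) (hm : m ≠ 0)
    (X Y Z W : k × k) (hXY : X - Y = n • v) (hZW : Z - W = m • v) :
    ratio X Y Z W = n / m := by
  have h : ∃ r : k, X - Y = r • (Z - W) := ⟨n / m, by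
    rw [hXY, hZW, smul_smul]; field_simp⟩
  have hspec := h.choose_spec
  have hz : (n - h.choose * m) • v = 0 := by
    rw [sub_smul, ← smul_smul, ← hZW, ← hspec, hXY, sub_self]
  rcases smul_eq_zero.mp hz with h0 | h0
  · have hnm : n = h.choose * m := sub_eq_zero.mp h0
    have hc : h.choose = n / m := by rw [hnm]; field_simp
    rw [ratio, dif_pos h, hc]
  · exact absurd h0 hv

lemma param_inj {k : Type*} [Field k] (O v : k × k) (hv : v ≠ 0) {a b : k}
    (h : O + a • v ≠ O + b • v) : a ≠ b := fun hab => h (by rw [hab])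

/-- The involution `γ` on the line `l = {O + t • v}` determined by `C ∈ l` and the pair
`(R,S)` (via `C = [X, γ(X) | R, S]`) is a projective transformation of `l`: in the affine
parameter `t` it is given by a fractional linear transformation `t ↦ (a t + b)/(c t + d)`
with `a d - b c ≠ 0` (such a projectivity of a line in the plane is a composition of
three perspectivities). -/
theorem stmt4 {k : Type*} [Field k] (O v C R S : k × k) (hv : v ≠ 0)
    (hC : ∃ c0 : k, C = O + c0 • v) (hR : ∃ r0 : k, R = O + r0 • v)
    (hS : ∃ s0 : k, S = O + s0 • v)
    (hRS : R ≠ S) (hCR : C ≠ R) (hCS : C ≠ S) :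
    ∃ a b c d : k, a * d - b * c ≠ 0 ∧ ∀ t u : k,
      O + t • v ≠ C → O + t • v ≠ R → O + u • v ≠ R →
      ratio C (O + u • v) C R = ratio (O + u • v) S R (O + t • v) →
      u * (c * t + d) = a * t + b := by
  obtain ⟨c0, rfl⟩ := hC
  obtain ⟨r0, rfl⟩ := hR
  obtain ⟨s0, rfl⟩ := hS
  have hcr : c0 ≠ r0 := param_inj O v hv hCR
  have hcs : c0 ≠ s0 := param_inj O v hv hCS
  refine ⟨c0, -(c0 * r0 + c0 * s0 - r0 * s0), 1, -c0, ?_, ?_⟩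
  · have : c0 * (-c0) - -(c0 * r0 + c0 * s0 - r0 * s0) * 1
        = -((c0 - r0) * (c0 - s0)) := by ring
    rw [this]
    intro h
    have := neg_eq_zero.mp h
    rcases mul_eq_zero.mp this with h' | h'
    · exact hcr (sub_eq_zero.mp h')
    · exact hcs (sub_eq_zero.mp h')
  · intro t u htC htR huR heq
    have htr : t ≠ r0 := param_inj O v hv htR
    have hur : u ≠ r0 := param_inj O v hv huR
    have e1 : (O + c0 • v) - (O + u • v) = (c0 - u) • v := by
      rw [sub_smul]; abel
    have e2 : (O + c0 • v) - (O + r0 • v) = (c0 - r0) • v := by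
      rw [sub_smul]; abel
    have e3 : (O + u • v) - (O + s0 • v) = (u - s0) • v := by
      rw [sub_smul]; abel
    have e4 : (O + r0 • v) - (O + t • v) = (r0 - t) • v := by
      rw [sub_smul]; abel
    rw [ratio_eq v hv _ _ (sub_ne_zero.mpr hcr) _ _ _ _ e1 e2,
        ratio_eq v hv _ _ (sub_ne_zero.mpr (fun h => htr h.symm)) _ _ _ _ e3 e4] at heq
    have hcr' : c0 - r0 ≠ 0 := sub_ne_zero.mpr hcr
    have hrt' : r0 - t ≠ 0 := sub_ne_zero.mpr fun h => htr h.symm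
    field_simp at heq
    linear_combination heq
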